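/- arXiv:2107.09167 — 2 statements merged into one kernel-verified Lean document; each statement's English description precedes it below -/
import Mathlib

section
/- If pP < 1, then for any fixed plant index n the conditional probability of the system event given that plant n is unavailable satisfies P(S | P_nᶜ) = r^API·(1 - Q^{b-1}), where Q = (1-pP)+pP·(1-pL)^c. (Paper equation (A15).) -/
/-!
Group the independent events by plant: the API suppliers form one block, and plant `j` together
with its lines forms another; σ-algebras generated by disjoint blocks are independent. On `(P n)ᶜ`
the system event is the intersection of "some supplier is up" and "some plant other than `n` is
operational". These two events and `(P n)ᶜ` lie in disjoint blocks, so the probability factors,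
and the second event is a union of `b - 1` independent events of probability
`pP * (1 - (1 - pL) ^ c)`.
-/

open MeasureTheory ProbabilityTheory MeasurableSpace Set

lemma compl_inter_iUnion_eq_iUnion_ne {Ω ι : Type*} (s t : ι → Set Ω) (n : ι) :
    (s n)ᶜ ∩ ⋃ j, s j ∩ t j = (s n)ᶜ ∩ ⋃ j : {j // j ≠ n}, s j ∩ t j := by
  ext ω
  simp only [mem_inter_iff, mem_compl_iff, mem_iUnion, Subtype.exists]
  constructor
  · rintro ⟨hn, j, hj⟩
    exact ⟨hn, j, fun hjn => hn (hjn ▸ hj.1), hj⟩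
  · rintro ⟨hn, j, -, hj⟩
    exact ⟨hn, j, hj⟩

namespace ProbabilityTheory

variable {Ω ι κ : Type*} {mΩ : MeasurableSpace Ω} {μ : Measure Ω}

lemma measurableSet_biSup_of_mem {m : ι → MeasurableSpace Ω} {S : Set ι} {i : ι} (hi : i ∈ S)
    {s : Set Ω} (hs : MeasurableSet[m i] s) : MeasurableSet[⨆ i ∈ S, m i] s :=
  le_biSup m hi s hs

lemma measurableSet_biSup_generateFrom (E : ι → Set Ω) {S : Set ι} {i : ι} (hi : i ∈ S) :
    MeasurableSet[⨆ i ∈ S, generateFrom {E i}] (E i) :=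
  measurableSet_biSup_of_mem hi (measurableSet_generateFrom rfl)

lemma iIndep.measureReal_inter_of_disjoint {m : ι → MeasurableSpace Ω} (h : iIndep m μ)
    (hle : ∀ i, m i ≤ mΩ) {S T : Set ι} (hST : Disjoint S T) {s t : Set Ω}
    (hs : MeasurableSet[⨆ i ∈ S, m i] s) (ht : MeasurableSet[⨆ i ∈ T, m i] t) :
    μ.real (s ∩ t) = μ.real s * μ.real t := by
  simp only [measureReal_def, (Indep_iff _ _ _).1 (indep_iSup_of_disjoint hle h hST) s t hs ht,
    ENNReal.toReal_mul]

lemma iIndep.measureReal_iUnion [Fintype ι] {m : ι → MeasurableSpace Ω} (h : iIndep m μ)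
    (hle : ∀ i, m i ≤ mΩ) {s : ι → Set Ω} (hs : ∀ i, MeasurableSet[m i] (s i)) :
    μ.real (⋃ i, s i) = 1 - ∏ i, (1 - μ.real (s i)) := by
  have := h.isProbabilityMeasure
  have hsc : ∀ i, MeasurableSet[m i] (s i)ᶜ := fun i => (hs i).compl
  rw [← compl_compl (⋃ i, s i), compl_iUnion,
    probReal_compl_eq_one_sub (MeasurableSet.iInter fun i => hle i _ (hsc i)),
    measureReal_def, h.meas_iInter hsc, ENNReal.toReal_prod]
  refine congrArg _ (Finset.prod_congr rfl fun i _ => ?_)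
  rw [← measureReal_def, probReal_compl_eq_one_sub (hle i _ (hs i))]

lemma iIndepSet.measureReal_iUnion [Fintype ι] {s : ι → Set Ω} (h : iIndepSet s μ)
    (hs : ∀ i, MeasurableSet (s i)) :
    μ.real (⋃ i, s i) = 1 - ∏ i, (1 - μ.real (s i)) :=
  ((iIndepSet_iff_iIndep _ _).1 h).measureReal_iUnion
    (fun i => generateFrom_singleton_le (hs i)) fun _ => measurableSet_generateFrom rfl

lemma iIndep.iIndep_biSup_fiber {m : ι → MeasurableSpace Ω} (h : iIndep m μ)
    (hle : ∀ i, m i ≤ mΩ) (f : ι → κ) :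
    iIndep (fun k => ⨆ i ∈ f ⁻¹' {k}, m i) μ := by
  classical
  have := h.isProbabilityMeasure
  refine (iIndep_iff _ μ).2 fun T => ?_
  induction T using Finset.induction_on with
  | empty => simp
  | insert k T hk ih =>
    intro t ht
    rw [Finset.set_biInter_insert, Finset.prod_insert hk,
      ← ih fun j hj => ht j (Finset.mem_insert_of_mem hj)]
    refine (Indep_iff _ _ _).1 (indep_iSup_of_disjoint hle h (T := f ⁻¹' T) ?_) _ _
      (ht k (Finset.mem_insert_self k T)) ?_
    · exact (disjoint_singleton_left.2 hk).preimage f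
    · refine MeasurableSet.biInter T.countable_toSet fun j hj => ?_
      exact biSup_mono (f := m) (fun i (hi : f i = j) => show f i ∈ (T : Set κ) from hi ▸ hj) _
        (ht j (Finset.mem_insert_of_mem hj))

abbrev blockAlgebra (E : ι → Set Ω) (f : ι → κ) (k : κ) : MeasurableSpace Ω :=
  ⨆ i ∈ f ⁻¹' {k}, generateFrom {E i}

lemma measurableSet_blockAlgebra (E : ι → Set Ω) (f : ι → κ) (i : ι) :
    MeasurableSet[blockAlgebra E f (f i)] (E i) :=
  measurableSet_biSup_generateFrom E (show i ∈ f ⁻¹' {f i} from rfl)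

lemma blockAlgebra_le {E : ι → Set Ω} (hE : ∀ i, MeasurableSet (E i)) (f : ι → κ) (k : κ) :
    blockAlgebra E f k ≤ mΩ :=
  iSup₂_le fun i _ => generateFrom_singleton_le (hE i)

lemma iIndepSet.iIndep_blockAlgebra {E : ι → Set Ω} (h : iIndepSet E μ)
    (hE : ∀ i, MeasurableSet (E i)) (f : ι → κ) : iIndep (blockAlgebra E f) μ :=
  ((iIndepSet_iff_iIndep _ _).1 h).iIndep_biSup_fiber
    (fun i => generateFrom_singleton_le (hE i)) f

end ProbabilityTheory

section SupplyChain

variable {Ω α β γ : Type*} {A : α → Set Ω} {P : β → Set Ω} {L : β → γ → Set Ω}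

def supplyChainEvents (A : α → Set Ω) (P : β → Set Ω) (L : β → γ → Set Ω) :
    α ⊕ (β ⊕ β × γ) → Set Ω :=
  Sum.elim A (Sum.elim P fun jk => L jk.1 jk.2)

/-- `none` is the block of the API suppliers. -/
def plantOf : α ⊕ (β ⊕ β × γ) → Option β :=
  Sum.elim (fun _ => none) (Sum.elim some fun jk => some jk.1)

lemma measurableSet_iUnion_supplier_block [Countable α] :
    MeasurableSet[blockAlgebra (supplyChainEvents A P L) plantOf none] (⋃ i, A i) :=
  .iUnion fun i => measurableSet_blockAlgebra _ plantOf (.inl i)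

lemma measurableSet_plant_block [Countable γ] (j : β) :
    MeasurableSet[blockAlgebra (supplyChainEvents A P L) plantOf (some j)]
      (P j ∩ ⋃ k, L j k) :=
  (measurableSet_blockAlgebra _ plantOf (.inr (.inl j))).inter
    (.iUnion fun k => measurableSet_blockAlgebra _ plantOf (.inr (.inr (j, k))))

variable [MeasurableSpace Ω] {μ : Measure Ω}

lemma measurableSet_supplyChainEvents (hA : ∀ i, MeasurableSet (A i))
    (hP : ∀ j, MeasurableSet (P j)) (hL : ∀ j k, MeasurableSet (L j k)) :
    ∀ x, MeasurableSet (supplyChainEvents A P L x)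
  | .inl i => hA i
  | .inr (.inl j) => hP j
  | .inr (.inr (j, k)) => hL j k

variable (h : iIndepSet (supplyChainEvents A P L) μ)
  (hE : ∀ x, MeasurableSet (supplyChainEvents A P L x))
include h hE

lemma measureReal_iUnion_supplier [Fintype α] :
    μ.real (⋃ i, A i) = 1 - ∏ i, (1 - μ.real (A i)) :=
  (h.precomp Sum.inl_injective).measureReal_iUnion fun i => hE (.inl i)

lemma measureReal_iUnion_line [Fintype γ] (j : β) :
    μ.real (⋃ k, L j k) = 1 - ∏ k, (1 - μ.real (L j k)) :=
  (h.precomp (g := fun k => .inr (.inr (j, k)))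
    (Sum.inr_injective.comp (Sum.inr_injective.comp (Prod.mk_right_injective j)))
    ).measureReal_iUnion fun _ => hE _

lemma measureReal_plant_inter_iUnion_line [Countable γ] (j : β) :
    μ.real (P j ∩ ⋃ k, L j k) = μ.real (P j) * μ.real (⋃ k, L j k) := by
  have hm := (iIndepSet_iff_iIndep _ _).1 h
  refine hm.measureReal_inter_of_disjoint (fun x => generateFrom_singleton_le (hE x))
    (S := {.inr (.inl j)}) (T := range fun k => .inr (.inr (j, k))) (by simp) ?_ ?_
  · exact measurableSet_biSup_generateFrom (supplyChainEvents A P L) (i := .inr (.inl j)) rfl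
  · exact .iUnion fun k => measurableSet_biSup_generateFrom (supplyChainEvents A P L)
      (i := .inr (.inr (j, k))) ⟨k, rfl⟩

lemma measureReal_iUnion_other_plants [Countable γ] [Fintype β] [DecidableEq β] (n : β) :
    μ.real (⋃ j : {j // j ≠ n}, P j ∩ ⋃ k, L j k)
      = 1 - ∏ j : {j // j ≠ n}, (1 - μ.real (P j ∩ ⋃ k, L j k)) :=
  ((h.iIndep_blockAlgebra hE plantOf).precomp (g := fun j : {j // j ≠ n} => some j.1)
    ((Option.some_injective _).comp Subtype.val_injective)).measureReal_iUnion
    (fun _ => blockAlgebra_le hE _ _) fun j => measurableSet_plant_block j.1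

lemma measureReal_compl_plant_inter_system [Countable α] [Countable β] [Countable γ] (n : β) :
    μ.real ((P n)ᶜ ∩ ((⋃ i, A i) ∩ ⋃ j, P j ∩ ⋃ k, L j k))
      = μ.real (P n)ᶜ *
        (μ.real (⋃ i, A i) * μ.real (⋃ j : {j // j ≠ n}, P j ∩ ⋃ k, L j k)) := by
  set B := blockAlgebra (supplyChainEvents A P L) plantOf
  have hB : iIndep B μ := h.iIndep_blockAlgebra hE plantOf
  have hle : ∀ o, B o ≤ ‹MeasurableSpace Ω› := blockAlgebra_le hE plantOf
  have hPn : MeasurableSet[⨆ o ∈ ({some n} : Set (Option β)), B o] (P n)ᶜ :=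
    (measurableSet_biSup_of_mem (m := B) (mem_singleton (some n))
      (measurableSet_blockAlgebra (supplyChainEvents A P L) plantOf (.inr (.inl n)))).compl
  have hU : ∀ S : Set (Option β), none ∈ S → MeasurableSet[⨆ o ∈ S, B o] (⋃ i, A i) :=
    fun S hS => measurableSet_biSup_of_mem hS measurableSet_iUnion_supplier_block
  have hW : ∀ S : Set (Option β), (∀ j ≠ n, some j ∈ S) →
      MeasurableSet[⨆ o ∈ S, B o] (⋃ j : {j // j ≠ n}, P j ∩ ⋃ k, L j k) :=
    fun S hS => .iUnion fun j =>
      measurableSet_biSup_of_mem (hS j j.2) (measurableSet_plant_block j.1)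
  rw [inter_left_comm, compl_inter_iUnion_eq_iUnion_ne, inter_left_comm,
    hB.measureReal_inter_of_disjoint hle disjoint_compl_right hPn
      ((hU _ (by simp)).inter (hW _ (by simp))),
    hB.measureReal_inter_of_disjoint hle disjoint_compl_right (hU _ (mem_singleton none))
      (hW _ (by simp))]

end SupplyChain

theorem stmt_6_general
    {Ω : Type*} [MeasurableSpace Ω] (μ : Measure Ω) [IsProbabilityMeasure μ]
    (pA pP pL : ℝ)
    (a b c : ℕ)
    (A : Fin a → Set Ω) (P : Fin b → Set Ω) (L : Fin b → Fin c → Set Ω)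
    (hmA : ∀ i, MeasurableSet (A i)) (hmP : ∀ j, MeasurableSet (P j))
    (hmL : ∀ j k, MeasurableSet (L j k))
    (hindep : iIndepSet
      (Sum.elim A (Sum.elim P (fun jk : Fin b × Fin c => L jk.1 jk.2))) μ)
    (hPA : ∀ i, (μ (A i)).toReal = pA)
    (hPP : ∀ j, (μ (P j)).toReal = pP)
    (hPL : ∀ j k, (μ (L j k)).toReal = pL)
    (hpPlt : pP < 1) (n : Fin b) :
    (μ[|(P n)ᶜ] ((⋃ i, A i) ∩ ⋃ j, P j ∩ ⋃ k, L j k)).toReal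
        = (1 - (1 - pA) ^ a) *
          (1 - ((1 - pP) + pP * (1 - pL) ^ c) ^ (b - 1)) := by
  have hE := measurableSet_supplyChainEvents hmA hmP hmL
  have hPn : μ.real (P n)ᶜ = 1 - pP := by
    rw [probReal_compl_eq_one_sub (hmP n), measureReal_def, hPP]
  have hQ : ∀ j, 1 - μ.real (P j ∩ ⋃ k, L j k) = (1 - pP) + pP * (1 - pL) ^ c := by
    intro j
    rw [measureReal_plant_inter_iUnion_line hindep hE, measureReal_iUnion_line hindep hE]
    simp only [measureReal_def, hPP, hPL, Finset.prod_const, Finset.card_univ, Fintype.card_fin]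
    ring
  rw [cond_apply (hmP n).compl, ENNReal.toReal_mul, ENNReal.toReal_inv, ← measureReal_def,
    ← measureReal_def, measureReal_compl_plant_inter_system hindep hE n,
    inv_mul_cancel_left₀ (by rw [hPn]; linarith), measureReal_iUnion_supplier hindep hE,
    measureReal_iUnion_other_plants hindep hE]
  simp only [hQ, Finset.prod_const, Finset.card_univ]
  simp [measureReal_def, hPA]

theorem stmt_6
    {Ω : Type*} [MeasurableSpace Ω] (μ : Measure Ω) [IsProbabilityMeasure μ]
    (pA pP pL : ℝ)
    (hpA0 : 0 ≤ pA) (hpA1 : pA ≤ 1) (hpP0 : 0 ≤ pP) (hpP1 : pP ≤ 1)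
    (hpL0 : 0 ≤ pL) (hpL1 : pL ≤ 1)
    (a b c : ℕ) (ha : 0 < a) (hb : 0 < b) (hc : 0 < c)
    (A : Fin a → Set Ω) (P : Fin b → Set Ω) (L : Fin b → Fin c → Set Ω)
    (hmA : ∀ i, MeasurableSet (A i)) (hmP : ∀ j, MeasurableSet (P j))
    (hmL : ∀ j k, MeasurableSet (L j k))
    (hindep : iIndepSet
      (Sum.elim A (Sum.elim P (fun jk : Fin b × Fin c => L jk.1 jk.2))) μ)
    (hPA : ∀ i, (μ (A i)).toReal = pA)
    (hPP : ∀ j, (μ (P j)).toReal = pP)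
    (hPL : ∀ j k, (μ (L j k)).toReal = pL)
    (hpPlt : pP < 1) (n : Fin b) :
    (μ[|(P n)ᶜ] ((⋃ i, A i) ∩ ⋃ j, P j ∩ ⋃ k, L j k)).toReal
        = (1 - (1 - pA) ^ a) *
          (1 - ((1 - pP) + pP * (1 - pL) ^ c) ^ (b - 1)) :=
  stmt_6_general μ pA pP pL a b c A P L hmA hmP hmL hindep hPA hPP hPL hpPlt n
end

section
/- If pL > 0, then for any fixed line indices (j,k) the conditional probability of the system event given that line L_{j,k} is available satisfies P(S | L_{j,k}) = r^API·(pP + (1-pP)·(1 - Q^{b-1})), where Q = (1-pP)+pP·(1-pL)^c. (Paper equation (A19).) -/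
open MeasureTheory ProbabilityTheory MeasurableSpace Set

section Aux
variable {Ω : Type*} [MeasurableSpace Ω] {μ : Measure Ω}

lemma my_grouping {ι κ : Type*}
    {s : ι → Set Ω} (hm : ∀ i, MeasurableSet (s i)) (hs : iIndepSet s μ) (g : ι → κ) :
    iIndep (fun n => generateFrom {t | ∃ i, g i = n ∧ s i = t}) μ := by
  classical
  refine iIndepSets.iIndep
    (fun n => generateFrom_le ?_)
    (fun n => piiUnionInter (fun i => ({s i} : Set (Set Ω))) (g ⁻¹' {n}))
    (fun n => isPiSystem_piiUnionInter _ (fun i => IsPiSystem.singleton _) _)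
    (fun n => ?_) ?_
  · rintro t ⟨i, -, rfl⟩; exact hm i
  · rw [generateFrom_piiUnionInter_singleton_left]
    rfl
  · rw [iIndepSets_iff]
    intro S f hf
    have hf' : ∀ n ∈ S, ∃ t : Finset ι, ↑t ⊆ g ⁻¹' {n} ∧ f n = ⋂ i ∈ t, s i := by
      intro n hn
      have := hf n hn
      rw [piiUnionInter_singleton_left] at this
      obtain ⟨t, ht, heq⟩ := this
      exact ⟨t, ht, heq⟩
    choose! p hp heq using hf'
    have hdisj : Set.PairwiseDisjoint (↑S : Set κ) p := by
      intro n hn n' hn' hne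
      refine Finset.disjoint_left.2 fun i hi hi' => hne ?_
      have h1 := hp n hn hi
      have h2 := hp n' hn' hi'
      simp only [Set.mem_preimage, Set.mem_singleton_iff] at h1 h2
      rw [← h1, h2]
    calc μ (⋂ n ∈ S, f n) = μ (⋂ i ∈ S.biUnion p, s i) := by
          rw [Finset.set_biInter_biUnion]
          exact congrArg μ (Set.iInter₂_congr heq)
      _ = ∏ i ∈ S.biUnion p, μ (s i) := hs.meas_biInter _
      _ = ∏ n ∈ S, ∏ i ∈ p n, μ (s i) := Finset.prod_biUnion hdisj
      _ = ∏ n ∈ S, μ (f n) := by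
          refine Finset.prod_congr rfl fun n hn => ?_
          rw [heq n hn, hs.meas_biInter]

lemma my_precomp {ι ι' : Type*} {u : ι' → ι} (hu : Function.Injective u)
    {s : ι → Set Ω} (hs : iIndepSet s μ) : iIndepSet (s ∘ u) μ := by
  classical
  rw [iIndepSet_iff] at hs ⊢
  intro S f hfm
  set f' : ι → Set Ω := fun i =>
    if h : ∃ i' ∈ S, u i' = i then f h.choose else Set.univ with hf'
  have hkey : ∀ i' ∈ S, f' (u i') = f i' := by
    intro i' hi'
    have h : ∃ i'' ∈ S, u i'' = u i' := ⟨i', hi', rfl⟩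
    simp only [hf', dif_pos h]
    obtain ⟨h1, h2⟩ := h.choose_spec
    rw [hu h2]
  have := hs (S.image u) (f := f') ?_
  · rw [Finset.set_biInter_finset_image, Finset.prod_image
      (fun x hx y hy hxy => hu hxy)] at this
    rw [Set.iInter₂_congr hkey] at this
    exact this.trans (Finset.prod_congr rfl fun i hi => by rw [hkey i hi])
  · intro i hi
    rw [Finset.mem_image] at hi
    obtain ⟨i', hi', rfl⟩ := hi
    rw [hkey i' hi']
    exact hfm i' hi'

lemma my_toReal_compl [IsProbabilityMeasure μ] {t : Set Ω} (hm : MeasurableSet t) :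
    (μ tᶜ).toReal = 1 - (μ t).toReal := by
  rw [prob_compl_eq_one_sub hm, ENNReal.toReal_sub_of_le prob_le_one ENNReal.one_ne_top,
    ENNReal.toReal_one]

lemma my_union_prob {ι : Type*} [Fintype ι] [IsProbabilityMeasure μ]
    {t : ι → Set Ω} (hm : ∀ i, MeasurableSet (t i)) (h : iIndepSet t μ) {p : ℝ}
    (hp : ∀ i, (μ (t i)).toReal = p) :
    (μ (⋃ i, t i)).toReal = 1 - (1 - p) ^ (Fintype.card ι) := by
  have h' := (iIndepSet_iff_iIndep _ _).1 h
  have hgen : ∀ i, MeasurableSet[generateFrom {t i}] (t i) :=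
    fun i => measurableSet_generateFrom rfl
  have hc : μ (⋂ i, (t i)ᶜ) = ∏ i, μ ((t i)ᶜ) :=
    h'.meas_iInter fun i => (hgen i).compl
  have hmu : MeasurableSet (⋃ i, t i) := MeasurableSet.iUnion hm
  have := my_toReal_compl (μ := μ) hmu
  rw [Set.compl_iUnion, hc, ENNReal.toReal_prod] at this
  have h2 : ∀ i, (μ ((t i)ᶜ)).toReal = 1 - p := fun i => by
    rw [my_toReal_compl (hm i), hp i]
  rw [Finset.prod_congr rfl (fun i _ => h2 i), Finset.prod_const, Finset.card_univ] at this
  linarith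

end Aux

theorem stmt_8
    {Ω : Type*} [MeasurableSpace Ω] (μ : Measure Ω) [IsProbabilityMeasure μ]
    (pA pP pL : ℝ)
    (hpA0 : 0 ≤ pA) (hpA1 : pA ≤ 1) (hpP0 : 0 ≤ pP) (hpP1 : pP ≤ 1)
    (hpL0 : 0 ≤ pL) (hpL1 : pL ≤ 1)
    (a b c : ℕ) (ha : 0 < a) (hb : 0 < b) (hc : 0 < c)
    (A : Fin a → Set Ω) (P : Fin b → Set Ω) (L : Fin b → Fin c → Set Ω)
    (hmA : ∀ i, MeasurableSet (A i)) (hmP : ∀ j, MeasurableSet (P j))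
    (hmL : ∀ j k, MeasurableSet (L j k))
    (hindep : iIndepSet
      (Sum.elim A (Sum.elim P (fun jk : Fin b × Fin c => L jk.1 jk.2))) μ)
    (hPA : ∀ i, (μ (A i)).toReal = pA)
    (hPP : ∀ j, (μ (P j)).toReal = pP)
    (hPL : ∀ j k, (μ (L j k)).toReal = pL)
    (hpLpos : 0 < pL) (j : Fin b) (k : Fin c) :
    (μ[|L j k] ((⋃ i, A i) ∩ ⋃ j, P j ∩ ⋃ k, L j k)).toReal
        = (1 - (1 - pA) ^ a) *
          (pP + (1 - pP) * (1 - ((1 - pP) + pP * (1 - pL) ^ c) ^ (b - 1))) := by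
  classical
  set s : Fin a ⊕ (Fin b ⊕ Fin b × Fin c) → Set Ω :=
    Sum.elim A (Sum.elim P (fun jk : Fin b × Fin c => L jk.1 jk.2)) with hs_def
  have hmS : ∀ i, MeasurableSet (s i) := by
    rintro (i | j' | ⟨j', k'⟩)
    exacts [hmA i, hmP j', hmL j' k']
  set U : Set Ω := ⋃ i, A i with hU_def
  set q : Fin b → Set Ω := fun j' => P j' ∩ ⋃ k', L j' k' with hq_def
  set V : Set Ω := ⋃ j', q j' with hV_def
  set W : Set Ω := ⋃ j', ⋃ (_ : j' ≠ j), q j' with hW_def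
  set X : Set Ω := P j ∪ W with hX_def
  -- plain measurability
  have hmq : ∀ j', MeasurableSet (q j') :=
    fun j' => (hmP j').inter (MeasurableSet.iUnion fun k' => hmL j' k')
  have hmU : MeasurableSet U := MeasurableSet.iUnion hmA
  have hmW : MeasurableSet W :=
    MeasurableSet.iUnion fun j' => MeasurableSet.iUnion fun _ => hmq j'
  have hmX : MeasurableSet X := (hmP j).union hmW
  -- set identity
  have hset : L j k ∩ (U ∩ V) = (U ∩ X) ∩ L j k := by
    ext x
    simp only [Set.mem_inter_iff, Set.mem_union, Set.mem_iUnion, hq_def, hV_def, hW_def,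
      hX_def]
    constructor
    · rintro ⟨hxL, hxU, j0, hj0P, hj0L⟩
      refine ⟨⟨hxU, ?_⟩, hxL⟩
      by_cases hj : j0 = j
      · subst hj; exact Or.inl hj0P
      · exact Or.inr ⟨j0, hj, hj0P, hj0L⟩
    · rintro ⟨⟨hxU, hPW⟩, hxL⟩
      refine ⟨hxL, hxU, ?_⟩
      rcases hPW with hPj | ⟨j0, _, hq0⟩
      · exact ⟨j, hPj, ⟨k, hxL⟩⟩
      · exact ⟨j0, hq0⟩
  -- split 1 : (U ∩ X) indep of L j k
  have h1 : μ ((U ∩ X) ∩ L j k) = μ (U ∩ X) * μ (L j k) := by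
    set g1 : (Fin a ⊕ (Fin b ⊕ Fin b × Fin c)) → Bool :=
      fun x => if x = Sum.inr (Sum.inr (j, k)) then true else false with hg1
    have hI := my_grouping hmS hindep g1
    set M : Bool → MeasurableSpace Ω :=
      fun n => generateFrom {t | ∃ i, g1 i = n ∧ s i = t} with hM
    have hbasic : ∀ i, MeasurableSet[M (g1 i)] (s i) :=
      fun i => measurableSet_generateFrom ⟨i, rfl, rfl⟩
    have hmUX : MeasurableSet[M false] (U ∩ X) := by
      have hA' : ∀ i0, MeasurableSet[M false] (A i0) := fun i0 =>
        measurableSet_generateFrom ⟨Sum.inl i0, by simp [hg1], rfl⟩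
      have hP' : ∀ j0, MeasurableSet[M false] (P j0) := fun j0 =>
        measurableSet_generateFrom ⟨Sum.inr (Sum.inl j0), by simp [hg1], rfl⟩
      have hL' : ∀ j0 k0, j0 ≠ j → MeasurableSet[M false] (L j0 k0) := fun j0 k0 hne =>
        measurableSet_generateFrom ⟨Sum.inr (Sum.inr (j0, k0)), by simp [hg1, hne], rfl⟩
      exact (MeasurableSet.iUnion hA').inter
        ((hP' j).union (MeasurableSet.iUnion fun j0 => MeasurableSet.iUnion fun hne =>
          (hP' j0).inter (MeasurableSet.iUnion fun k0 => hL' j0 k0 hne)))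
    have hmLjk : MeasurableSet[M true] (L j k) :=
      measurableSet_generateFrom ⟨Sum.inr (Sum.inr (j, k)), by simp [hg1], rfl⟩
    exact ((hI.indep (by simp : (false : Bool) ≠ true)).indepSet_of_measurableSet
      hmUX hmLjk).measure_inter_eq_mul
  -- split 2 : U indep of X
  have h2 : μ (U ∩ X) = μ U * μ X := by
    set g2 : (Fin a ⊕ (Fin b ⊕ Fin b × Fin c)) → Bool :=
      Sum.elim (fun _ => true) (fun _ => false) with hg2
    have hI := my_grouping hmS hindep g2
    set M : Bool → MeasurableSpace Ω :=
      fun n => generateFrom {t | ∃ i, g2 i = n ∧ s i = t} with hM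
    have hmU' : MeasurableSet[M true] U :=
      MeasurableSet.iUnion fun i0 =>
        measurableSet_generateFrom ⟨Sum.inl i0, rfl, rfl⟩
    have hP' : ∀ j0, MeasurableSet[M false] (P j0) := fun j0 =>
      measurableSet_generateFrom ⟨Sum.inr (Sum.inl j0), rfl, rfl⟩
    have hL' : ∀ j0 k0, MeasurableSet[M false] (L j0 k0) := fun j0 k0 =>
      measurableSet_generateFrom ⟨Sum.inr (Sum.inr (j0, k0)), rfl, rfl⟩
    have hmX' : MeasurableSet[M false] X :=
      (hP' j).union (MeasurableSet.iUnion fun j0 => MeasurableSet.iUnion fun _ =>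
        (hP' j0).inter (MeasurableSet.iUnion fun k0 => hL' j0 k0))
    exact ((hI.indep (by simp : (true : Bool) ≠ false)).indepSet_of_measurableSet
      hmU' hmX').measure_inter_eq_mul
  -- value of μ U
  have hUval : (μ U).toReal = 1 - (1 - pA) ^ a := by
    have hpre : iIndepSet (fun i0 : Fin a => A i0) μ :=
      my_precomp (u := Sum.inl) Sum.inl_injective hindep
    have := my_union_prob (μ := μ) hmA hpre (p := pA) hPA
    simpa using this
  -- value of μ (⋃ k', L j' k')
  have hLUval : ∀ j', (μ (⋃ k', L j' k')).toReal = 1 - (1 - pL) ^ c := by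
    intro j'
    have hinj : Function.Injective (fun k0 : Fin c => (Sum.inr (Sum.inr (j', k0)) :
        Fin a ⊕ (Fin b ⊕ Fin b × Fin c))) := by
      intro x y h; simpa using h
    have hpre : iIndepSet (fun k0 : Fin c => L j' k0) μ := my_precomp hinj hindep
    have := my_union_prob (μ := μ) (hmL j') hpre (p := pL) (hPL j')
    simpa using this
  -- value of μ (q j')
  have hqval : ∀ j', (μ (q j')).toReal = pP * (1 - (1 - pL) ^ c) := by
    intro j'
    set g4 : (Fin a ⊕ (Fin b ⊕ Fin b × Fin c)) → Bool :=
      fun x => if x = Sum.inr (Sum.inl j') then true else false with hg4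
    have hI := my_grouping hmS hindep g4
    set M : Bool → MeasurableSpace Ω :=
      fun n => generateFrom {t | ∃ i, g4 i = n ∧ s i = t} with hM
    have hP' : MeasurableSet[M true] (P j') :=
      measurableSet_generateFrom ⟨Sum.inr (Sum.inl j'), by simp [hg4], rfl⟩
    have hL' : MeasurableSet[M false] (⋃ k', L j' k') :=
      MeasurableSet.iUnion fun k0 =>
        measurableSet_generateFrom ⟨Sum.inr (Sum.inr (j', k0)), by simp [hg4], rfl⟩
    have hmul : μ (q j') = μ (P j') * μ (⋃ k', L j' k') :=
      ((hI.indep (by simp : (true : Bool) ≠ false)).indepSet_of_measurableSet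
        hP' hL').measure_inter_eq_mul
    rw [hmul, ENNReal.toReal_mul, hPP j', hLUval j']
  -- value of μ X
  set Q : ℝ := (1 - pP) + pP * (1 - pL) ^ c with hQ_def
  have hXval : (μ X).toReal = 1 - (1 - pP) * Q ^ (b - 1) := by
    set E : Fin b → Set Ω := fun j' => (if j' = j then P j else q j')ᶜ with hE
    have hXc : Xᶜ = ⋂ j', E j' := by
      ext x
      constructor
      · intro hx
        refine Set.mem_iInter.2 fun j' => ?_
        by_cases h : j' = j
        · subst h
          simp only [hE, if_pos rfl]
          exact fun hp => hx (Or.inl hp)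
        · simp only [hE, if_neg h]
          exact fun hq0 => hx (Or.inr (Set.mem_iUnion.2 ⟨j', Set.mem_iUnion.2 ⟨h, hq0⟩⟩))
      · intro hx hmemX
        rcases hmemX with hPj | hW'
        · have := Set.mem_iInter.1 hx j
          simp only [hE, if_pos rfl] at this
          exact this hPj
        · obtain ⟨j0, hj0⟩ := Set.mem_iUnion.1 hW'
          obtain ⟨hne, hq0⟩ := Set.mem_iUnion.1 hj0
          have := Set.mem_iInter.1 hx j0
          simp only [hE, if_neg hne] at this
          exact this hq0
    have hEmeas : ∀ j', MeasurableSet[generateFrom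
        {t | ∃ i, (Sum.elim (fun _ => j) (Sum.elim id Prod.fst) : _ → Fin b) i = j' ∧ s i = t}]
        (E j') := by
      intro j'
      have hP' : MeasurableSet[generateFrom
          {t | ∃ i, (Sum.elim (fun _ => j) (Sum.elim id Prod.fst) : _ → Fin b) i = j' ∧ s i = t}]
          (P j') := measurableSet_generateFrom ⟨Sum.inr (Sum.inl j'), rfl, rfl⟩
      have hL' : ∀ k0, MeasurableSet[generateFrom
          {t | ∃ i, (Sum.elim (fun _ => j) (Sum.elim id Prod.fst) : _ → Fin b) i = j' ∧ s i = t}]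
          (L j' k0) := fun k0 =>
        measurableSet_generateFrom ⟨Sum.inr (Sum.inr (j', k0)), rfl, rfl⟩
      by_cases h : j' = j
      · subst h
        simp only [hE, if_pos rfl]
        exact hP'.compl
      · simp only [hE, if_neg h]
        exact (hP'.inter (MeasurableSet.iUnion hL')).compl
    have hI := my_grouping hmS hindep
      (Sum.elim (fun _ => j) (Sum.elim id Prod.fst) : _ → Fin b)
    have hprod : μ (⋂ j', E j') = ∏ j', μ (E j') := hI.meas_iInter hEmeas
    have hcompl : (μ Xᶜ).toReal = (1 - pP) * Q ^ (b - 1) := by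
      rw [hXc, hprod, ENNReal.toReal_prod]
      have hf : ∀ j', (μ (E j')).toReal = if j' = j then 1 - pP else Q := by
        intro j'
        by_cases h : j' = j
        · subst h
          have hEj : E j' = (P j')ᶜ := by simp [hE]
          rw [hEj, if_pos rfl, my_toReal_compl (hmP j'), hPP j']
        · have hEj : E j' = (q j')ᶜ := by simp [hE, h]
          rw [hEj, if_neg h, my_toReal_compl (hmq j'), hqval j', hQ_def]
          ring
      rw [Finset.prod_congr rfl fun j' _ => hf j']
      rw [← Finset.mul_prod_erase Finset.univ _ (Finset.mem_univ j), if_pos rfl]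
      have : ∀ j' ∈ Finset.univ.erase j,
          (if j' = j then 1 - pP else Q) = Q := by
        intro j' hj'
        rw [if_neg (Finset.ne_of_mem_erase hj')]
      rw [Finset.prod_congr rfl this, Finset.prod_const,
        Finset.card_erase_of_mem (Finset.mem_univ j), Finset.card_univ, Fintype.card_fin]
    have := my_toReal_compl (μ := μ) hmX
    linarith
  -- assemble
  have hLne : μ (L j k) ≠ 0 := by
    intro h0
    have := hPL j k
    rw [h0, ENNReal.toReal_zero] at this
    linarith
  rw [cond_apply (hmL j k)]
  have hVgoal : ((⋃ i, A i) ∩ ⋃ j0, P j0 ∩ ⋃ k0, L j0 k0) = U ∩ V := rfl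
  rw [hVgoal, hset, h1, h2]
  have hcancel : (μ (L j k))⁻¹ * (μ U * μ X * μ (L j k)) = μ U * μ X := by
    calc (μ (L j k))⁻¹ * (μ U * μ X * μ (L j k))
        = (μ (L j k))⁻¹ * μ (L j k) * (μ U * μ X) := by ring
      _ = μ U * μ X := by
          rw [ENNReal.inv_mul_cancel hLne (measure_ne_top μ _), one_mul]
  rw [hcancel, ENNReal.toReal_mul, hUval, hXval]
  ring
end
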